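/- arXiv:1312.0158 — 5 statements merged into one kernel-verified Lean document; each statement's English description precedes it below -/
import Mathlib

section
/- For any collection Φ = (φ₁, …, φ_N) of vectors in ℂ^M, the intensity measurement map 𝒜_Φ is NOT injective on ℂ^M/S¹ if and only if there exists a nonzero Hermitian matrix Q ∈ ℂ^{M×M} with rank(Q) ≤ 2 and φₙ* Q φₙ = 0 for every 1 ≤ n ≤ N (where φₙ* denotes the conjugate-transpose of φₙ). -/
open Matrix Complex MvPolynomial Finset

/-- The intensity measurements of `x` with respect to the frame `Φ`:
the `n`-th measurement is `|⟨x, φₙ⟩|²` where `⟨x, y⟩ = ∑ m, x m * conj (y m)`. -/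
noncomputable def intensity {M N : ℕ} (Φ : Fin N → Fin M → ℂ) (x : Fin M → ℂ) : Fin N → ℝ :=
  fun n => ‖∑ m, x m * (starRingEnd ℂ) (Φ n m)‖ ^ 2

/-- `𝒜_Φ` is injective on `ℂ^M / S¹`. -/
noncomputable def PhaseInjective {M N : ℕ} (Φ : Fin N → Fin M → ℂ) : Prop :=
  ∀ x y : Fin M → ℂ, intensity Φ x = intensity Φ y →
    ∃ θ : ℝ, x = fun m => Complex.exp (θ * Complex.I) * y m

/-- The frame `Φ = U + iV` with vectors `φₙ = uₙ + i vₙ`, where `uₙ, vₙ` are the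
`n`-th columns of `U` and `V`. -/
noncomputable def frameOf {M N : ℕ} (U V : Matrix (Fin M) (Fin N) ℝ) : Fin N → Fin M → ℂ :=
  fun n m => (U m n : ℂ) + (V m n : ℂ) * Complex.I

/-!
If `𝒜_Φ x = 𝒜_Φ y`, then `Q = x x* - y y*` works, since `φ* (x x*) φ = |⟨x, φ⟩|²`, and `Q = 0`
exactly when `x` and `y` differ by a phase. Conversely, by the spectral theorem a Hermitian `Q`
of rank at most two is, up to sign, `x x* - y y*` or `x x* + y y*`. In the first case `x` and `y`
have the same intensities without differing by a phase; in the second all intensities of `x` and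
`y` vanish, so whichever of them is nonzero has the same intensities as `0`.
-/

open ComplexConjugate

namespace Matrix

section Field
variable {K m n : Type*} [Field K] [Fintype n]

theorem rank_add_le (A B : Matrix m n K) : (A + B).rank ≤ A.rank + B.rank := by
  rw [rank, rank, rank, mulVecLin_add]
  exact (Submodule.finrank_mono (LinearMap.range_add_le _ _)).trans
    (Submodule.finrank_add_le_finrank_add_finrank _ _)

theorem rank_vecMulVec_sub_vecMulVec_le (w v : m → K) (w' v' : n → K) :
    (vecMulVec w w' - vecMulVec v v').rank ≤ 2 := by
  rw [sub_eq_add_neg, ← neg_vecMulVec]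
  exact (rank_add_le _ _).trans (add_le_add (rank_vecMulVec_le _ _) (rank_vecMulVec_le _ _))

end Field

lemma isHermitian_vecMulVec_self_star {α n : Type*} [Mul α] [StarMul α] (x : n → α) :
    (vecMulVec x (star x)).IsHermitian := by
  rw [IsHermitian, conjTranspose_vecMulVec, star_star]

variable {𝕜 n : Type*} [RCLike 𝕜]

lemma smul_vecMulVec_self_of_nonneg {a : ℝ} (ha : 0 ≤ a) (x : n → 𝕜) :
    a • vecMulVec x (star x) = vecMulVec ((√a : 𝕜) • x) (star ((√a : 𝕜) • x)) := by
  rw [star_smul, smul_vecMulVec, vecMulVec_smul, smul_smul, RCLike.star_def, RCLike.conj_ofReal,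
    ← RCLike.ofReal_mul, Real.mul_self_sqrt ha, RCLike.real_smul_eq_coe_smul (K := 𝕜)]

lemma exists_smul_vecMulVec_self_eq (a : ℝ) (x : n → 𝕜) :
    ∃ z : n → 𝕜, a • vecMulVec x (star x) = vecMulVec z (star z) ∨
      a • vecMulVec x (star x) = -vecMulVec z (star z) := by
  rcases le_total 0 a with ha | ha
  · exact ⟨(√a : 𝕜) • x, Or.inl (smul_vecMulVec_self_of_nonneg ha x)⟩
  · refine ⟨(√(-a) : 𝕜) • x, Or.inr ?_⟩
    rw [← smul_vecMulVec_self_of_nonneg (neg_nonneg.2 ha), neg_smul, neg_neg]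

variable [Fintype n]

lemma star_dotProduct_vecMulVec_self_mulVec (x φ : n → 𝕜) :
    star φ ⬝ᵥ vecMulVec x (star x) *ᵥ φ = ((‖x ⬝ᵥ star φ‖ ^ 2 : ℝ) : 𝕜) := by
  rw [vecMulVec_mulVec, dotProduct_smul, op_smul_eq_mul, RCLike.ofReal_pow, ← RCLike.mul_conj,
    ← RCLike.star_def, ← star_dotProduct_star, star_star, dotProduct_comm (star φ),
    dotProduct_comm (star x)]

lemma IsHermitian.eq_sum_eigenvalues_smul_vecMulVec [DecidableEq n] {A : Matrix n n 𝕜}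
    (hA : A.IsHermitian) :
    A = ∑ k, hA.eigenvalues k •
      vecMulVec ⇑(hA.eigenvectorBasis k) (star ⇑(hA.eigenvectorBasis k)) := by
  conv_lhs => rw [hA.spectral_theorem]
  ext i j
  rw [Unitary.conjStarAlgAut_apply, mul_apply]
  simp only [mul_diagonal, sum_apply, smul_apply, vecMulVec_apply, star_apply,
    IsHermitian.eigenvectorUnitary_apply, Function.comp_apply, Pi.star_apply,
    RCLike.real_smul_eq_coe_mul]
  exact sum_congr rfl fun k _ => by ring

lemma IsHermitian.exists_eq_smul_vecMulVec_add_smul_vecMulVec [DecidableEq n]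
    {A : Matrix n n 𝕜} (hA : A.IsHermitian) (hr : A.rank ≤ 2) :
    ∃ (a b : ℝ) (x y : n → 𝕜), A = a • vecMulVec x (star x) + b • vecMulVec y (star y) := by
  rw [hA.eq_sum_eigenvalues_smul_vecMulVec,
    ← sum_filter_of_ne (p := fun k => hA.eigenvalues k ≠ 0) fun k _ h hk =>
      h (by rw [hk, zero_smul])]
  set s : Finset n := {k | hA.eigenvalues k ≠ 0}
  have hs : #s ≤ 2 := by rwa [← Fintype.card_subtype, ← hA.rank_eq_card_non_zero_eigs]
  obtain h | h | h : #s = 0 ∨ #s = 1 ∨ #s = 2 := by omega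
  · rw [card_eq_zero.1 h]
    exact ⟨0, 0, 0, 0, by simp⟩
  · obtain ⟨i, hi⟩ := card_eq_one.1 h
    exact ⟨hA.eigenvalues i, 0, hA.eigenvectorBasis i, 0,
      by rw [hi, sum_singleton, zero_smul, add_zero]⟩
  · obtain ⟨i, j, hij, hij'⟩ := card_eq_two.1 h
    exact ⟨_, _, _, _, by rw [hij', sum_pair hij]⟩

lemma IsHermitian.exists_eq_vecMulVec_sub_or_add [DecidableEq n] {A : Matrix n n 𝕜}
    (hA : A.IsHermitian) (hr : A.rank ≤ 2) :
    ∃ x y : n → 𝕜, A = vecMulVec x (star x) - vecMulVec y (star y) ∨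
      A = vecMulVec x (star x) + vecMulVec y (star y) ∨
      -A = vecMulVec x (star x) + vecMulVec y (star y) := by
  obtain ⟨a, b, x, y, rfl⟩ := hA.exists_eq_smul_vecMulVec_add_smul_vecMulVec hr
  obtain ⟨z, hz | hz⟩ := exists_smul_vecMulVec_self_eq a x <;>
  obtain ⟨w, hw | hw⟩ := exists_smul_vecMulVec_self_eq b y <;>
  rw [hz, hw]
  · exact ⟨z, w, Or.inr (Or.inl rfl)⟩
  · exact ⟨z, w, Or.inl (sub_eq_add_neg _ _).symm⟩
  · exact ⟨w, z, Or.inl (neg_add_eq_sub _ _)⟩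
  · exact ⟨z, w, Or.inr (Or.inr (by abel))⟩

end Matrix

lemma vecMulVec_self_eq_iff_exists_phase {n : Type*} {x y : n → ℂ} :
    vecMulVec x (star x) = vecMulVec y (star y) ↔ ∃ θ : ℝ, x = exp (θ * I) • y := by
  constructor
  · intro h
    have hentry : ∀ i j, x i * conj (x j) = y i * conj (y j) := fun i j => congr_fun₂ h i j
    by_cases hy : y = 0
    · refine ⟨0, ?_⟩
      subst hy
      ext i
      simpa [mul_conj] using hentry i i
    obtain ⟨j, hj⟩ := Function.ne_iff.1 hy
    have hnorm : ‖x j‖ = ‖y j‖ := by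
      have := hentry j j
      rw [mul_conj', mul_conj'] at this
      exact (pow_left_inj₀ (norm_nonneg _) (norm_nonneg _) two_ne_zero).1 (by exact_mod_cast this)
    have hxj : x j ≠ 0 := norm_ne_zero_iff.1 (hnorm ▸ norm_ne_zero_iff.2 hj)
    set c := conj (y j) / conj (x j)
    have hc : ‖c‖ = 1 := by
      rw [norm_div, RCLike.norm_conj, RCLike.norm_conj, hnorm, div_self (norm_ne_zero_iff.2 hj)]
    have hc_exp : exp (c.arg * I) = c := by simpa [hc] using norm_mul_exp_arg_mul_I c
    refine ⟨c.arg, funext fun i => ?_⟩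
    rw [hc_exp, Pi.smul_apply, smul_eq_mul, div_mul_eq_mul_div, eq_div_iff (by simpa using hxj),
      hentry i j, mul_comm]
  · rintro ⟨θ, rfl⟩
    rw [star_smul, smul_vecMulVec, vecMulVec_smul, smul_smul, star_def, mul_conj',
      norm_exp_ofReal_mul_I, ofReal_one, one_pow, one_smul]

lemma intensity_apply_eq_star_dotProduct_mulVec {M N : ℕ} (Φ : Fin N → Fin M → ℂ)
    (x : Fin M → ℂ) (n : Fin N) :
    (intensity Φ x n : ℂ) = star (Φ n) ⬝ᵥ vecMulVec x (star x) *ᵥ Φ n :=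
  (star_dotProduct_vecMulVec_self_mulVec x (Φ n)).symm

lemma star_dotProduct_vecMulVec_sub_vecMulVec_mulVec {M N : ℕ} (Φ : Fin N → Fin M → ℂ)
    (x y : Fin M → ℂ) (n : Fin N) :
    star (Φ n) ⬝ᵥ (vecMulVec x (star x) - vecMulVec y (star y)) *ᵥ Φ n =
      ((intensity Φ x n - intensity Φ y n : ℝ) : ℂ) := by
  rw [sub_mulVec, dotProduct_sub, ofReal_sub, intensity_apply_eq_star_dotProduct_mulVec,
    intensity_apply_eq_star_dotProduct_mulVec]

lemma star_dotProduct_vecMulVec_add_vecMulVec_mulVec {M N : ℕ} (Φ : Fin N → Fin M → ℂ)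
    (x y : Fin M → ℂ) (n : Fin N) :
    star (Φ n) ⬝ᵥ (vecMulVec x (star x) + vecMulVec y (star y)) *ᵥ Φ n =
      ((intensity Φ x n + intensity Φ y n : ℝ) : ℂ) := by
  rw [add_mulVec, dotProduct_add, ofReal_add, intensity_apply_eq_star_dotProduct_mulVec,
    intensity_apply_eq_star_dotProduct_mulVec]

lemma intensity_nonneg {M N : ℕ} (Φ : Fin N → Fin M → ℂ) (x : Fin M → ℂ) (n : Fin N) :
    0 ≤ intensity Φ x n := by
  unfold intensity
  positivity

lemma intensity_zero {M N : ℕ} (Φ : Fin N → Fin M → ℂ) : intensity Φ 0 = 0 := by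
  ext
  simp [intensity]

lemma not_phaseInjective_iff {M N : ℕ} (Φ : Fin N → Fin M → ℂ) :
    ¬ PhaseInjective Φ ↔ ∃ x y : Fin M → ℂ,
      intensity Φ x = intensity Φ y ∧ vecMulVec x (star x) ≠ vecMulVec y (star y) := by
  simp only [PhaseInjective, not_forall, ne_eq, vecMulVec_self_eq_iff_exists_phase, exists_prop]
  rfl

lemma exists_intensity_eq_of_vecMulVec_add_ne_zero {M N : ℕ} {Φ : Fin N → Fin M → ℂ}
    {x y : Fin M → ℂ} (hQ : vecMulVec x (star x) + vecMulVec y (star y) ≠ 0)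
    (hΦ : ∀ n, star (Φ n) ⬝ᵥ (vecMulVec x (star x) + vecMulVec y (star y)) *ᵥ Φ n = 0) :
    ∃ x y : Fin M → ℂ,
      intensity Φ x = intensity Φ y ∧ vecMulVec x (star x) ≠ vecMulVec y (star y) := by
  have hI n : intensity Φ x n = 0 ∧ intensity Φ y n = 0 := by
    refine (add_eq_zero_iff_of_nonneg (intensity_nonneg Φ x n) (intensity_nonneg Φ y n)).1 ?_
    simpa only [star_dotProduct_vecMulVec_add_vecMulVec_mulVec, ofReal_eq_zero] using hΦ n
  by_cases hx : vecMulVec x (star x) = 0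
  · refine ⟨y, 0, ?_, by simpa [hx] using hQ⟩
    rw [intensity_zero]
    exact funext fun n => (hI n).2
  · refine ⟨x, 0, ?_, by simpa using hx⟩
    rw [intensity_zero]
    exact funext fun n => (hI n).1

theorem not_phaseInjective_iff_exists_hermitian (M N : ℕ) (Φ : Fin N → Fin M → ℂ) :
    ¬ PhaseInjective Φ ↔
      ∃ Q : Matrix (Fin M) (Fin M) ℂ, Q ≠ 0 ∧ Q.IsHermitian ∧ Q.rank ≤ 2 ∧
        ∀ n : Fin N, (fun m => (starRingEnd ℂ) (Φ n m)) ⬝ᵥ Q *ᵥ (Φ n) = 0 := by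
  have hstar n : (fun m => (starRingEnd ℂ) (Φ n m)) = star (Φ n) := rfl
  simp only [hstar, not_phaseInjective_iff]
  constructor
  · rintro ⟨x, y, hI, hne⟩
    refine ⟨vecMulVec x (star x) - vecMulVec y (star y), sub_ne_zero.2 hne,
      (isHermitian_vecMulVec_self_star x).sub (isHermitian_vecMulVec_self_star y),
      rank_vecMulVec_sub_vecMulVec_le _ _ _ _, fun n => ?_⟩
    rw [star_dotProduct_vecMulVec_sub_vecMulVec_mulVec, hI, sub_self, ofReal_zero]
  · rintro ⟨Q, hQ, hH, hr, hΦ⟩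
    obtain ⟨x, y, rfl | rfl | hneg⟩ := hH.exists_eq_vecMulVec_sub_or_add hr
    · refine ⟨x, y, funext fun n => ?_, sub_ne_zero.1 hQ⟩
      have h := hΦ n
      rwa [star_dotProduct_vecMulVec_sub_vecMulVec_mulVec, ofReal_eq_zero, sub_eq_zero] at h
    · exact exists_intensity_eq_of_vecMulVec_add_ne_zero hQ hΦ
    · refine exists_intensity_eq_of_vecMulVec_add_ne_zero (hneg ▸ neg_ne_zero.2 hQ) fun n => ?_
      rw [← hneg, neg_mulVec, dotProduct_neg, hΦ n, neg_zero]
end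

section
/- Let M = 2 and N = 4, let U, V ∈ ℝ^{2×4} have entries u_{mn}, v_{mn}, and let J be the 4×4 real matrix whose n-th row is ( u_{1n}² + v_{1n}², 2(u_{1n}u_{2n} + v_{1n}v_{2n}), u_{2n}² + v_{2n}², 2(u_{2n}v_{1n} − u_{1n}v_{2n}) ) for n = 1, 2, 3, 4. Then the intensity measurement map 𝒜_Φ associated to the frame Φ = U + iV (with vectors φₙ = uₙ + i vₙ ∈ ℂ²) is injective on ℂ²/S¹ if and only if det(J) ≠ 0. -/
open Matrix Complex MvPolynomial Finset

/-!
The `n`-th intensity of `x` is linear in the rank-one Hermitian matrix `x xᴴ`: it is the `n`-th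
entry of `J` applied to the real coordinates `(|x₀|², Re x₀x̄₁, |x₁|², Im x₀x̄₁)` of `x xᴴ`, and
`x xᴴ` determines `x` up to a global phase. Hence `det J ≠ 0` gives injectivity. Conversely, a
nonzero kernel vector of `J` gives a Hermitian `H ≠ 0` with `J H = 0`. Either `H = x xᴴ - y yᴴ`,
and then `x` and `y` have equal intensities without being phase-equivalent; or `H` is definite,
`±H = x xᴴ + y yᴴ` with `x ≠ 0`, and then the intensities of `x` vanish like those of `0`.
-/

open ComplexConjugate

noncomputable def measurementMatrix (U V : Matrix (Fin 2) (Fin 4) ℝ) : Matrix (Fin 4) (Fin 4) ℝ :=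
  Matrix.of fun n : Fin 4 =>
    ![U 0 n ^ 2 + V 0 n ^ 2,
      2 * (U 0 n * U 1 n + V 0 n * V 1 n),
      U 1 n ^ 2 + V 1 n ^ 2,
      2 * (U 1 n * V 0 n - U 0 n * V 1 n)]

/-- Coordinates of the Hermitian matrix `!![a, c; conj c, b]`, in the order of the columns of
`measurementMatrix`. -/
def hermCoords (a b : ℝ) (c : ℂ) : Fin 4 → ℝ := ![a, c.re, b, c.im]

lemma hermCoords_add (a b a' b' : ℝ) (c c' : ℂ) :
    hermCoords a b c + hermCoords a' b' c' = hermCoords (a + a') (b + b') (c + c') := by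
  ext i; fin_cases i <;> simp [hermCoords]

lemma hermCoords_sub (a b a' b' : ℝ) (c c' : ℂ) :
    hermCoords a b c - hermCoords a' b' c' = hermCoords (a - a') (b - b') (c - c') := by
  ext i; fin_cases i <;> simp [hermCoords]

lemma hermCoords_neg (a b : ℝ) (c : ℂ) : hermCoords (-a) (-b) (-c) = -hermCoords a b c := by
  ext i; fin_cases i <;> simp [hermCoords]

lemma hermCoords_inj {a b a' b' : ℝ} {c c' : ℂ} :
    hermCoords a b c = hermCoords a' b' c' ↔ a = a' ∧ b = b' ∧ c = c' := by
  refine ⟨fun h ↦ ⟨congrFun h 0, congrFun h 2, Complex.ext (congrFun h 1) (congrFun h 3)⟩, ?_⟩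
  rintro ⟨rfl, rfl, rfl⟩
  rfl

lemma hermCoords_eta (v : Fin 4 → ℝ) : hermCoords (v 0) (v 2) ⟨v 1, v 3⟩ = v := by
  ext i; fin_cases i <;> rfl

/-- The matrix `x xᴴ`, in the coordinates `hermCoords`. -/
noncomputable def phaseLift (x : Fin 2 → ℂ) : Fin 4 → ℝ :=
  hermCoords (normSq (x 0)) (normSq (x 1)) (x 0 * conj (x 1))

lemma intensity_frameOf (U V : Matrix (Fin 2) (Fin 4) ℝ) (x : Fin 2 → ℂ) :
    intensity (frameOf U V) x = measurementMatrix U V *ᵥ phaseLift x := by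
  ext n
  simp only [intensity, frameOf, phaseLift, hermCoords, measurementMatrix, Fin.sum_univ_two,
    mulVec, dotProduct, Fin.sum_univ_four, of_apply, Matrix.cons_val, Complex.sq_norm,
    normSq_apply, add_re, add_im, mul_re, mul_im, neg_re, neg_im, map_add, map_mul, conj_re,
    conj_im, conj_ofReal, conj_I, ofReal_re, ofReal_im, I_re, I_im]
  ring

lemma mul_conj_eq_iff_exists_exp {ι : Type*} (x y : ι → ℂ) :
    (∀ j k, x j * conj (x k) = y j * conj (y k)) ↔
      ∃ θ : ℝ, x = fun m ↦ exp (θ * I) * y m := by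
  constructor
  · intro h
    by_cases hy : y = 0
    · refine ⟨0, funext fun m ↦ ?_⟩
      have hm := h m m
      rw [hy, Pi.zero_apply, zero_mul, mul_conj, ofReal_eq_zero, normSq_eq_zero] at hm
      simp [hy, hm]
    obtain ⟨k, hk⟩ := Function.ne_iff.mp hy
    have hkk := h k k
    have hnorm : ‖x k‖ = ‖y k‖ := by
      rw [mul_conj', mul_conj'] at hkk
      exact (pow_left_inj₀ (norm_nonneg _) (norm_nonneg _) two_ne_zero).mp (by exact_mod_cast hkk)
    obtain ⟨θ, hθ⟩ := (norm_eq_one_iff (x k / y k)).mp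
      (by rw [norm_div, hnorm, div_self (by simpa using hk)])
    refine ⟨θ, funext fun j ↦ ?_⟩
    rw [hθ, div_mul_eq_mul_div, eq_div_iff hk]
    apply mul_left_cancel₀ ((map_ne_zero conj).mpr hk)
    linear_combination (-x j) * hkk + x k * h j k
  · rintro ⟨θ, rfl⟩ j k
    have he : exp (θ * I) * conj (exp (θ * I)) = 1 := by
      rw [mul_conj', norm_exp_ofReal_mul_I]
      norm_num
    simp only [map_mul]
    linear_combination (y j * conj (y k)) * he

lemma phaseLift_eq_iff (x y : Fin 2 → ℂ) :
    phaseLift x = phaseLift y ↔ ∃ θ : ℝ, x = fun m ↦ exp (θ * I) * y m := by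
  rw [← mul_conj_eq_iff_exists_exp, phaseLift, phaseLift, hermCoords_inj]
  constructor
  · rintro ⟨h0, h1, h01⟩ j k
    fin_cases j <;> fin_cases k
    · simp [mul_conj, h0]
    · exact h01
    · simpa [mul_comm] using congrArg conj h01
    · simp [mul_conj, h1]
  · intro h
    refine ⟨?_, ?_, h 0 1⟩ <;> exact_mod_cast (mul_conj _).symm.trans ((h _ _).trans (mul_conj _))

lemma exists_phaseLift_of_pos {a : ℝ} (ha : 0 < a) (b : ℝ) (c : ℂ) :
    ∃ x y : Fin 2 → ℂ, x ≠ 0 ∧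
      (phaseLift x - phaseLift y = hermCoords a b c ∨
        phaseLift x + phaseLift y = hermCoords a b c) := by
  -- `x = (√a, c̄/√a)` gets every entry right but the last, which is off by `s`; `y = (0, √|s|)`
  -- corrects it, subtracted or added according to the sign of `s`.
  set s := b - normSq c / a
  have hsa : (√a : ℂ) ≠ 0 := by exact_mod_cast (Real.sqrt_pos.mpr ha).ne'
  have hx1 : normSq (conj c / √a) = normSq c / a := by
    rw [normSq_div, normSq_conj, normSq_ofReal, Real.mul_self_sqrt ha.le]
  have hx01 : (√a : ℂ) * conj (conj c / √a) = c := by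
    rw [map_div₀, conj_conj, conj_ofReal]
    field_simp
  refine ⟨![√a, conj c / √a], ![0, √|s|], fun h ↦ hsa (congrFun h 0), ?_⟩
  simp only [phaseLift, hermCoords_sub, hermCoords_add, hermCoords_inj, Matrix.cons_val_zero,
    Matrix.cons_val_one, normSq_ofReal, Real.mul_self_sqrt ha.le, Real.mul_self_sqrt (abs_nonneg s),
    hx1, hx01, normSq_zero, zero_mul, sub_zero, add_zero, true_and, and_true]
  rcases le_or_gt 0 s with hs | hs
  · right; rw [abs_of_nonneg hs]; ring
  · left; rw [abs_of_neg hs]; ring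

lemma exists_phaseLift_sub_of_zero (b : ℝ) (c : ℂ) :
    ∃ x y : Fin 2 → ℂ, phaseLift x - phaseLift y = hermCoords 0 b c := by
  refine ⟨![c, ((1 + b) / 2 : ℝ)], ![-c, ((1 - b) / 2 : ℝ)], ?_⟩
  simp only [phaseLift, hermCoords_sub, hermCoords_inj, Matrix.cons_val_zero, Matrix.cons_val_one,
    normSq_neg, normSq_ofReal, conj_ofReal]
  refine ⟨sub_self _, by ring, ?_⟩
  push_cast
  ring

lemma exists_phaseLift_decomposition (a b : ℝ) (c : ℂ) :
    ∃ x y : Fin 2 → ℂ, phaseLift x - phaseLift y = hermCoords a b c ∨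
      x ≠ 0 ∧ (phaseLift x + phaseLift y = hermCoords a b c ∨
        phaseLift x + phaseLift y = -hermCoords a b c) := by
  rcases lt_trichotomy a 0 with ha | rfl | ha
  · obtain ⟨x, y, hx, hsub | hadd⟩ := exists_phaseLift_of_pos (neg_pos.mpr ha) (-b) (-c)
    · exact ⟨y, x, Or.inl (by rw [← neg_sub, hsub, hermCoords_neg, neg_neg])⟩
    · exact ⟨x, y, Or.inr ⟨hx, Or.inr (by rw [hadd, hermCoords_neg])⟩⟩
  · obtain ⟨x, y, h⟩ := exists_phaseLift_sub_of_zero b c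
    exact ⟨x, y, Or.inl h⟩
  · obtain ⟨x, y, hx, hsub | hadd⟩ := exists_phaseLift_of_pos ha b c
    · exact ⟨x, y, Or.inl hsub⟩
    · exact ⟨x, y, Or.inr ⟨hx, Or.inl hadd⟩⟩

lemma not_phaseInjective_of_mulVec_eq_zero {U V : Matrix (Fin 2) (Fin 4) ℝ} {v : Fin 4 → ℝ}
    (hv : v ≠ 0) (hJv : measurementMatrix U V *ᵥ v = 0) : ¬PhaseInjective (frameOf U V) := by
  intro hinj
  rw [← hermCoords_eta v] at hv hJv
  obtain ⟨x, y, hsub | ⟨hx, hadd⟩⟩ := exists_phaseLift_decomposition (v 0) (v 2) ⟨v 1, v 3⟩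
  · have hxy : intensity (frameOf U V) x = intensity (frameOf U V) y := by
      rw [intensity_frameOf, intensity_frameOf, ← sub_eq_zero, ← mulVec_sub, hsub, hJv]
    apply hv
    rw [← hsub, sub_eq_zero, phaseLift_eq_iff]
    exact hinj x y hxy
  · have hsum : intensity (frameOf U V) x + intensity (frameOf U V) y = 0 := by
      rw [intensity_frameOf, intensity_frameOf, ← mulVec_add]
      rcases hadd with h | h <;> simp [h, mulVec_neg, hJv]
    have hnonneg (z : Fin 2 → ℂ) : 0 ≤ intensity (frameOf U V) z := fun n ↦ sq_nonneg _
    have hx0 : intensity (frameOf U V) x = intensity (frameOf U V) 0 := by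
      rw [((add_eq_zero_iff_of_nonneg (hnonneg x) (hnonneg y)).mp hsum).1]
      ext n
      simp [intensity]
    obtain ⟨θ, hθ⟩ := hinj x 0 hx0
    exact hx (hθ.trans (funext fun _ ↦ mul_zero _))

theorem phaseInjective_iff_det_ne_zero (U V : Matrix (Fin 2) (Fin 4) ℝ) :
    PhaseInjective (frameOf U V) ↔
      (Matrix.of fun n : Fin 4 =>
        ![U 0 n ^ 2 + V 0 n ^ 2,
          2 * (U 0 n * U 1 n + V 0 n * V 1 n),
          U 1 n ^ 2 + V 1 n ^ 2,
          2 * (U 1 n * V 0 n - U 0 n * V 1 n)]).det ≠ 0 := by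
  change PhaseInjective (frameOf U V) ↔ (measurementMatrix U V).det ≠ 0
  refine ⟨fun hinj hdet ↦ ?_, fun hdet x y hxy ↦ ?_⟩
  · obtain ⟨v, hv, hJv⟩ := exists_mulVec_eq_zero_iff.mpr hdet
    exact not_phaseInjective_of_mulVec_eq_zero hv hJv hinj
  · have hJ : Function.Injective (measurementMatrix U V *ᵥ ·) :=
      mulVec_injective_iff_isUnit.mpr ((isUnit_iff_isUnit_det _).mpr hdet.isUnit)
    rw [intensity_frameOf, intensity_frameOf] at hxy
    exact (phaseLift_eq_iff x y).mp (hJ hxy)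
end

section
/- For any M ≥ 1 and N ≥ 1, the set of collections Φ = (φ₁, …, φ_N) of vectors in ℂ^M (identified with points of ℂ^{M×N}) for which the intensity measurement map 𝒜_Φ is not injective on ℂ^M/S¹ is closed in the Euclidean topology on ℂ^{M×N}. -/
open Matrix Complex MvPolynomial Finset

/-!
Whether `𝒜_Φ(x) = 𝒜_Φ(y)` depends only on `Q = x x* - y y*`, as
`|⟨x, φ⟩|² - |⟨y, φ⟩|² = ⟨Q φ, φ⟩`. The map `(x, y) ↦ (2⟨x, y⟩ x - s y, 2⟨y, x⟩ y - s x)`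
multiplies `Q` by the real number `4|⟨x, y⟩|² - s²`, and it makes the pair orthogonal when
`s = t + √(t² - 4|⟨x, y⟩|²)`, `t = ‖x‖² + ‖y‖²`, a root of `s² - 2ts + 4|⟨x, y⟩|² = 0`.
If `x ∉ S¹ y` then `2|⟨x, y⟩| < t`, because `‖x - e^{iθ} y‖² = t - 2|⟨x, y⟩|` for the right `θ`;
so `s > 2|⟨x, y⟩|` and the new pair is nonzero. A nonzero orthogonal pair is never of the form
`(e^{iθ} y, y)`. Hence `Φ` is not injective iff some orthogonal pair on the unit sphere of
`ℂ^M × ℂ^M` has equal measurements, and the set of such `Φ` is the projection of a closed set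
along a compact factor.
-/

open scoped InnerProductSpace ComplexConjugate

theorem isClosed_setOf_exists_mem_of_isCompact {X Y : Type*} [TopologicalSpace X]
    [TopologicalSpace Y] {K : Set Y} (hK : IsCompact K) {P : X → Y → Prop}
    (hP : IsClosed {p : X × Y | P p.1 p.2}) : IsClosed {x | ∃ y ∈ K, P x y} := by
  have : CompactSpace K := isCompact_iff_compactSpace.mp hK
  convert isClosedMap_fst_of_compactSpace (Y := K) _
    (hP.preimage (continuous_id.prodMap continuous_subtype_val))
  ext x
  simp [Subtype.exists]

lemma exp_neg_arg_mul_I_mul (z : ℂ) : exp (↑(-arg z) * I) * z = ‖z‖ := by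
  calc exp (↑(-arg z) * I) * z = exp (↑(-arg z) * I) * (‖z‖ * exp (arg z * I)) := by
        rw [norm_mul_exp_arg_mul_I]
    _ = ‖z‖ := by rw [mul_left_comm, ← Complex.exp_add]; simp

section InnerProductSpace

variable {E : Type*} [NormedAddCommGroup E] [InnerProductSpace ℂ E]

lemma two_mul_norm_inner_lt_of_forall_ne_exp_smul {x y : E}
    (h : ∀ θ : ℝ, x ≠ exp (θ * I) • y) : 2 * ‖⟪x, y⟫_ℂ‖ < ‖x‖ ^ 2 + ‖y‖ ^ 2 := by
  set w := exp (↑(-arg ⟪x, y⟫_ℂ) * I)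
  have hw : ‖w‖ = 1 := norm_exp_ofReal_mul_I _
  have hdist : ‖x - w • y‖ ^ 2 = ‖x‖ ^ 2 + ‖y‖ ^ 2 - 2 * ‖⟪x, y⟫_ℂ‖ := by
    rw [norm_sub_sq (𝕜 := ℂ), inner_smul_right, exp_neg_arg_mul_I_mul, norm_smul, hw]
    simp only [RCLike.re_to_complex, ofReal_re]
    ring
  by_contra! hle
  refine h (-arg ⟪x, y⟫_ℂ) (sub_eq_zero.mp (norm_eq_zero.mp ?_))
  nlinarith [norm_nonneg (x - w • y)]

noncomputable def mixPair (s : ℝ) (x y : E) : E × E :=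
  ((2 * ⟪x, y⟫_ℂ) • x - (s : ℂ) • y, (2 * conj ⟪x, y⟫_ℂ) • y - (s : ℂ) • x)

lemma inner_mixPair (s : ℝ) (x y : E) :
    ⟪(mixPair s x y).1, (mixPair s x y).2⟫_ℂ =
      conj ⟪x, y⟫_ℂ * (s ^ 2 - 2 * s * (‖x‖ ^ 2 + ‖y‖ ^ 2) + 4 * ‖⟪x, y⟫_ℂ‖ ^ 2) := by
  simp only [mixPair, inner_sub_left, inner_sub_right, inner_smul_left,
    inner_smul_right, inner_self_eq_norm_sq_to_K, ← inner_conj_symm y x, map_mul, conj_ofReal,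
    map_ofNat]
  linear_combination (4 * conj ⟪x, y⟫_ℂ) * mul_conj' ⟪x, y⟫_ℂ

lemma norm_inner_mixPair_sq_sub (s : ℝ) (x y φ : E) :
    ‖⟪φ, (mixPair s x y).1⟫_ℂ‖ ^ 2 - ‖⟪φ, (mixPair s x y).2⟫_ℂ‖ ^ 2 =
      (4 * ‖⟪x, y⟫_ℂ‖ ^ 2 - s ^ 2) * (‖⟪φ, x⟫_ℂ‖ ^ 2 - ‖⟪φ, y⟫_ℂ‖ ^ 2) := by
  simp only [mixPair, inner_sub_right, inner_smul_right]
  apply ofReal_injective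
  push_cast
  simp only [← mul_conj', map_sub, map_mul, conj_ofReal, conj_conj, map_ofNat]
  ring

lemma mixPair_ne_zero {s : ℝ} {x y : E} (hs : 2 * ‖⟪x, y⟫_ℂ‖ < s) (hxy : (x, y) ≠ 0) :
    mixPair s x y ≠ 0 := by
  intro h
  obtain ⟨hx', hy'⟩ := Prod.mk_eq_zero.mp h
  have hdet : (2 * ⟪x, y⟫_ℂ) * (2 * conj ⟪x, y⟫_ℂ) - (s : ℂ) * s ≠ 0 := by
    rw [mul_mul_mul_comm, mul_conj']
    exact_mod_cast (by nlinarith [norm_nonneg ⟪x, y⟫_ℂ] : 2 * 2 * ‖⟪x, y⟫_ℂ‖ ^ 2 - s * s ≠ 0)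
  have hy : y = 0 := by
    have hcomb : ((2 * ⟪x, y⟫_ℂ) * (2 * conj ⟪x, y⟫_ℂ) - (s : ℂ) * s) • y =
        (s : ℂ) • ((2 * ⟪x, y⟫_ℂ) • x - (s : ℂ) • y) +
          (2 * ⟪x, y⟫_ℂ) • ((2 * conj ⟪x, y⟫_ℂ) • y - (s : ℂ) • x) := by
      module
    rw [hx', hy', smul_zero, smul_zero, add_zero] at hcomb
    exact (smul_eq_zero.mp hcomb).resolve_left hdet
  have hx : x = 0 := by
    rw [hy, smul_zero, zero_sub, neg_eq_zero] at hy'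
    have hs0 : (s : ℂ) ≠ 0 := ofReal_ne_zero.mpr (by linarith [norm_nonneg ⟪x, y⟫_ℂ])
    exact (smul_eq_zero.mp hy').resolve_left hs0
  exact hxy (by rw [hx, hy]; rfl)

lemma exists_inner_eq_zero_of_two_mul_norm_inner_lt {x y : E}
    (h : 2 * ‖⟪x, y⟫_ℂ‖ < ‖x‖ ^ 2 + ‖y‖ ^ 2) :
    ∃ z : E × E, ⟪z.1, z.2⟫_ℂ = 0 ∧ z ≠ 0 ∧
      ∀ φ : E, ‖⟪φ, x⟫_ℂ‖ = ‖⟪φ, y⟫_ℂ‖ → ‖⟪φ, z.1⟫_ℂ‖ = ‖⟪φ, z.2⟫_ℂ‖ := by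
  have hxy : (x, y) ≠ 0 := by
    rintro hxy
    obtain ⟨rfl, rfl⟩ := Prod.mk_eq_zero.mp hxy
    simp at h
  set t := ‖x‖ ^ 2 + ‖y‖ ^ 2
  set r := ‖⟪x, y⟫_ℂ‖
  set s := t + √(t ^ 2 - 4 * r ^ 2)
  have hr : 0 ≤ r := norm_nonneg _
  have hsqrt : √(t ^ 2 - 4 * r ^ 2) ^ 2 = t ^ 2 - 4 * r ^ 2 := Real.sq_sqrt (by nlinarith)
  have hroot : s ^ 2 - 2 * s * t + 4 * r ^ 2 = 0 := by linear_combination hsqrt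
  have hs : 2 * r < s := by linarith [Real.sqrt_nonneg (t ^ 2 - 4 * r ^ 2)]
  refine ⟨mixPair s x y, ?_, mixPair_ne_zero hs hxy, fun φ hφ => ?_⟩
  · rw [inner_mixPair]
    exact mul_eq_zero_of_right _ (by exact_mod_cast hroot)
  · have hsq := norm_inner_mixPair_sq_sub s x y φ
    rw [hφ, sub_self, mul_zero, sub_eq_zero] at hsq
    exact (pow_left_inj₀ (norm_nonneg _) (norm_nonneg _) two_ne_zero).mp hsq

def PhaseRetrievable {ι : Type*} (Φ : ι → E) : Prop :=
  ∀ x y : E, (∀ i, ‖⟪Φ i, x⟫_ℂ‖ = ‖⟪Φ i, y⟫_ℂ‖) → ∃ θ : ℝ, x = exp (θ * I) • y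

variable (E) in
def unitOrthogonalPairs : Set (E × E) :=
  {z | ⟪z.1, z.2⟫_ℂ = 0} ∩ Metric.sphere 0 1

lemma isCompact_unitOrthogonalPairs [FiniteDimensional ℂ E] :
    IsCompact (unitOrthogonalPairs E) :=
  (isCompact_sphere 0 1).inter_left (isClosed_eq (continuous_fst.inner continuous_snd)
    continuous_const)

lemma not_phaseRetrievable_iff {ι : Type*} {Φ : ι → E} :
    ¬ PhaseRetrievable Φ ↔
      ∃ z ∈ unitOrthogonalPairs E, ∀ i, ‖⟪Φ i, z.1⟫_ℂ‖ = ‖⟪Φ i, z.2⟫_ℂ‖ := by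
  constructor
  · intro hΦ
    simp only [PhaseRetrievable, not_forall, not_exists, exists_prop] at hΦ
    obtain ⟨x, y, heq, hne⟩ := hΦ
    obtain ⟨z, horth, hz, hzeq⟩ := exists_inner_eq_zero_of_two_mul_norm_inner_lt
      (two_mul_norm_inner_lt_of_forall_ne_exp_smul hne)
    refine ⟨(‖z‖⁻¹ : ℂ) • z, ⟨?_, mem_sphere_zero_iff_norm.mpr (norm_smul_inv_norm hz)⟩,
      fun i => ?_⟩
    · simp [horth]
    · simp [hzeq _ (heq i)]
  · rintro ⟨⟨x, y⟩, ⟨horth, hnorm⟩, heq⟩ hΦ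
    obtain ⟨θ, rfl⟩ := hΦ x y heq
    have hy : y = 0 := by
      simpa [inner_smul_left, Complex.exp_ne_zero] using horth
    simp [hy] at hnorm

theorem isClosed_setOf_not_phaseRetrievable {ι : Type*} [FiniteDimensional ℂ E] :
    IsClosed {Φ : ι → E | ¬ PhaseRetrievable Φ} := by
  simp_rw [not_phaseRetrievable_iff]
  refine isClosed_setOf_exists_mem_of_isCompact (isCompact_unitOrthogonalPairs (E := E)) ?_
  simp only [Set.ofPred_forall]
  exact isClosed_iInter fun i => isClosed_eq (by fun_prop) (by fun_prop)

end InnerProductSpace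

lemma intensity_eq_norm_inner_sq {M N : ℕ} (Φ : Fin N → Fin M → ℂ) (x : Fin M → ℂ)
    (n : Fin N) :
    intensity Φ x n =
      ‖⟪(WithLp.toLp 2 (Φ n) : EuclideanSpace ℂ (Fin M)), WithLp.toLp 2 x⟫_ℂ‖ ^ 2 := by
  simp [intensity, EuclideanSpace.inner_eq_star_dotProduct, dotProduct]

lemma phaseInjective_iff_phaseRetrievable {M N : ℕ} (Φ : Fin N → Fin M → ℂ) :
    PhaseInjective Φ ↔
      PhaseRetrievable fun n => (WithLp.toLp 2 (Φ n) : EuclideanSpace ℂ (Fin M)) := by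
  have hint (x y : Fin M → ℂ) : intensity Φ x = intensity Φ y ↔
      ∀ n, ‖⟪(WithLp.toLp 2 (Φ n) : EuclideanSpace ℂ (Fin M)), WithLp.toLp 2 x⟫_ℂ‖ =
        ‖⟪(WithLp.toLp 2 (Φ n) : EuclideanSpace ℂ (Fin M)), WithLp.toLp 2 y⟫_ℂ‖ := by
    simp only [funext_iff, intensity_eq_norm_inner_sq,
      pow_left_inj₀ (norm_nonneg _) (norm_nonneg _) two_ne_zero]
  have hphase (x y : Fin M → ℂ) (θ : ℝ) : (x = fun m => exp (θ * I) * y m) ↔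
      (WithLp.toLp 2 x : EuclideanSpace ℂ (Fin M)) = exp (θ * I) • WithLp.toLp 2 y := by
    rw [← WithLp.toLp_smul, (WithLp.toLp_injective 2).eq_iff]
    rfl
  constructor
  · intro h x y hxy
    obtain ⟨θ, hθ⟩ := h x.ofLp y.ofLp ((hint _ _).mpr hxy)
    exact ⟨θ, (hphase _ _ θ).mp hθ⟩
  · intro h x y hxy
    obtain ⟨θ, hθ⟩ := h _ _ ((hint x y).mp hxy)
    exact ⟨θ, (hphase x y θ).mpr hθ⟩

theorem isClosed_non_injective_frames_general (M N : ℕ) :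
    IsClosed {Φ : Fin N → Fin M → ℂ | ¬ PhaseInjective Φ} := by
  simp_rw [phaseInjective_iff_phaseRetrievable]
  exact isClosed_setOf_not_phaseRetrievable.preimage (by fun_prop)

theorem isClosed_non_injective_frames (M N : ℕ) (hM : 1 ≤ M) (hN : 1 ≤ N) :
    IsClosed {Φ : Fin N → Fin M → ℂ | ¬ PhaseInjective Φ} :=
  isClosed_non_injective_frames_general M N
end

section
/- Let M = 2^k + 1 for some integer k ≥ 0. Then the product ∏_{i=0}^{M−3} binom(2+i, 2) divides the product ∏_{i=0}^{M−3} binom(M+i, 2), and the quotient d_{M,2} = ∏_{i=0}^{M−3} binom(M+i,2) / binom(2+i,2) is an odd integer. (Here d_{M,2} is the degree of the variety of M×M complex matrices of rank at most 2; for M = 2 the empty product gives d_{2,2} = 1.) -/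
/-!
Writing `M = m + 2`, each factor of the quotient is `C(m+2+i, 2) / C(2+i, 2)`, and since
`2 C(n+2, 2) = (n+2)(n+1)` both products are ratios of factorials; the quotient collapses to
`(2m+1)! (2m)! / ((m+1)! m!)² = C(2m+1, m) · Cat(m)`, and `(2m+1) Cat(m) = C(2m+1, m)`.
For `m = 2^k - 1` the number `2m + 1 = 2^(k+1) - 1` has only ones in binary, so by Lucas's
theorem `C(2m+1, m)` is odd, and so is its divisor `Cat(m)`.
-/

open Matrix Complex MvPolynomial Finset

open Nat

theorem choose_two_mul_two (n : ℕ) : (n + 2).choose 2 * 2 = (n + 2) * (n + 1) := by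
  rw [choose_two_right, Nat.div_mul_cancel (even_mul_pred_self _).two_dvd]
  rfl

theorem prod_range_choose_two_mul_two_pow (a n : ℕ) :
    (∏ i ∈ range n, (a + 2 + i).choose 2) * 2 ^ n * ((a + 1)! * a !) =
      (a + n + 1)! * (a + n)! := by
  induction n with
  | zero => simp
  | succ n ih =>
    rw [prod_range_succ, pow_succ, add_right_comm a 2 n]
    calc _ = (∏ i ∈ range n, (a + 2 + i).choose 2) * 2 ^ n * ((a + 1)! * a !) *
          ((a + n + 2).choose 2 * 2) := by ring
      _ = (a + n + 1)! * (a + n)! * ((a + n + 2) * (a + n + 1)) := by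
          rw [ih, choose_two_mul_two]
      _ = _ := by rw [← add_assoc, factorial_succ (a + n + 1), factorial_succ (a + n)]; ring

theorem choose_two_mul_add_one_mul_factorial_mul_factorial (m : ℕ) :
    (2 * m + 1).choose m * ((m + 1)! * m !) = (2 * m + 1)! := by
  rw [show 2 * m + 1 = m + 1 + m by omega, ← add_choose_mul_factorial_mul_factorial (m + 1) m]
  ring

theorem catalan_mul_factorial_mul_factorial (m : ℕ) :
    catalan m * ((m + 1)! * m !) = (2 * m)! := by
  rw [two_mul, ← add_choose_mul_factorial_mul_factorial m m, ← two_mul,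
    ← centralBinom_eq_two_mul_choose, ← succ_mul_catalan_eq_centralBinom, factorial_succ]
  ring

theorem choose_two_mul_add_one_eq_mul_catalan (m : ℕ) :
    (2 * m + 1).choose m = (2 * m + 1) * catalan m := by
  have h := choose_mul_succ_eq (2 * m) m
  rw [← centralBinom_eq_two_mul_choose, ← succ_mul_catalan_eq_centralBinom,
    show 2 * m + 1 - m = m + 1 by omega] at h
  exact Nat.eq_of_mul_eq_mul_right (by omega : 0 < m + 1) (by rw [← h]; ring)

theorem prod_range_add_choose_two_eq_mul_choose_mul_catalan (m : ℕ) :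
    ∏ i ∈ range m, (m + 2 + i).choose 2 =
      (∏ i ∈ range m, (2 + i).choose 2) * ((2 * m + 1).choose m * catalan m) := by
  have hB := prod_range_choose_two_mul_two_pow 0 m
  have hA := prod_range_choose_two_mul_two_pow m m
  simp only [zero_add, factorial_zero, factorial_one, mul_one] at hB
  set P := (m + 1)! * (m !)
  refine Nat.eq_of_mul_eq_mul_right (show 0 < 2 ^ m * P by positivity) ?_
  calc (∏ i ∈ range m, (m + 2 + i).choose 2) * (2 ^ m * P)
      = (2 * m + 1)! * (2 * m)! := by rw [← mul_assoc, hA, two_mul]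
    _ = ((2 * m + 1).choose m * P) * (catalan m * P) := by
      rw [choose_two_mul_add_one_mul_factorial_mul_factorial, catalan_mul_factorial_mul_factorial]
    _ = _ := by rw [← hB]; ring

theorem odd_choose_two_pow_sub_one (j : ℕ) {t : ℕ} (ht : t < 2 ^ j) :
    Odd ((2 ^ j - 1).choose t) := by
  induction j generalizing t with
  | zero => simp_all
  | succ j ih =>
    have hpow : 2 ^ (j + 1) = 2 * 2 ^ j := pow_succ' 2 j
    have hpos := j.one_le_two_pow
    have hdigit : choose 1 (t % 2) = 1 := choose_eq_one_iff.mpr (by omega)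
    have hlucas := Choose.choose_modEq_choose_mod_mul_choose_div_nat
      (p := 2) (n := 2 ^ (j + 1) - 1) (k := t)
    rw [show (2 ^ (j + 1) - 1) % 2 = 1 by omega, show (2 ^ (j + 1) - 1) / 2 = 2 ^ j - 1 by omega,
      hdigit, one_mul] at hlucas
    exact Nat.odd_iff.mpr (Eq.trans hlucas (Nat.odd_iff.mp (ih (by omega))))

theorem odd_choose_two_mul_two_pow_sub_one_add_one (k : ℕ) :
    Odd ((2 * (2 ^ k - 1) + 1).choose (2 ^ k - 1)) := by
  have hpow : 2 ^ (k + 1) = 2 * 2 ^ k := pow_succ' 2 k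
  have hpos := k.one_le_two_pow
  rw [show 2 * (2 ^ k - 1) + 1 = 2 ^ (k + 1) - 1 by omega]
  exact odd_choose_two_pow_sub_one (k + 1) (by omega)

theorem odd_catalan_two_pow_sub_one (k : ℕ) : Odd (catalan (2 ^ k - 1)) := by
  have h := odd_choose_two_mul_two_pow_sub_one_add_one k
  rw [choose_two_mul_add_one_eq_mul_catalan] at h
  exact (odd_mul.mp h).2

theorem degree_rank_two_odd (M k : ℕ) (hM : M = 2 ^ k + 1) :
    (∏ i ∈ Finset.range (M - 2), Nat.choose (2 + i) 2) ∣
      (∏ i ∈ Finset.range (M - 2), Nat.choose (M + i) 2) ∧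
    Odd ((∏ i ∈ Finset.range (M - 2), Nat.choose (M + i) 2) /
      (∏ i ∈ Finset.range (M - 2), Nat.choose (2 + i) 2)) := by
  obtain ⟨m, hm, rfl⟩ : ∃ m, m = 2 ^ k - 1 ∧ M = m + 2 :=
    ⟨_, rfl, by have := k.one_le_two_pow; omega⟩
  have hpos : 0 < ∏ i ∈ range m, (2 + i).choose 2 :=
    prod_pos fun i _ => choose_pos (by omega)
  rw [Nat.add_sub_cancel, prod_range_add_choose_two_eq_mul_choose_mul_catalan,
    Nat.mul_div_cancel_left _ hpos]
  subst hm
  exact ⟨dvd_mul_right _ _,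
    (odd_choose_two_mul_two_pow_sub_one_add_one k).mul (odd_catalan_two_pow_sub_one k)⟩
end

section
/- For any three vectors φ₁, φ₂, φ₃ ∈ ℂ², there exists a nonzero Hermitian matrix Q ∈ ℂ^{2×2} with φₙ* Q φₙ = 0 for n = 1, 2, 3 (where φₙ* denotes the conjugate-transpose of φₙ). Consequently, for M = 2 and N = 3 the intensity measurement map 𝒜_Φ is not injective on ℂ²/S¹ for any Φ = (φ₁, φ₂, φ₃). -/
open Matrix Complex MvPolynomial Finset

/-!
The real-linear map `Q ↦ (φₙ* Q φₙ)ₙ` from the Hermitian `M × M` matrices, a real space of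
dimension `M²`, to `ℝᴺ` has a nonzero kernel element `Q` as soon as `N < M²`. Writing
`Q = ∑ λᵢ uᵢ uᵢ*` with an orthonormal eigenbasis, `∑ λᵢ |⟨uᵢ, φₙ⟩|² = 0` for every `n`.
If `Q` has rank at most two and eigenvalues `λᵢ > 0 > λⱼ`, then the orthogonal vectors `√λᵢ uᵢ`
and `√(-λⱼ) uⱼ` have the same intensities. If instead all eigenvalues have the same sign, then
every term vanishes, and an eigenvector with nonzero eigenvalue has the intensities of `0`.
-/
section HermitianNullVector
variable {ι n : Type*}

/-- Its real and imaginary parts are `A + Aᵀ` and `A - Aᵀ`, so it is injective and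
Hermitian-valued. -/
noncomputable def hermitianOfReal : Matrix n n ℝ →ₗ[ℝ] Matrix n n ℂ where
  toFun A := of fun i j => (1 + I) * A i j + (1 - I) * A j i
  map_add' A B := by ext i j; simp only [Matrix.add_apply, ofReal_add, of_apply]; ring
  map_smul' c A := by
    ext i j
    simp only [Matrix.smul_apply, smul_eq_mul, ofReal_mul, of_apply, RingHom.id_apply, real_smul]
    ring

theorem hermitianOfReal_apply (A : Matrix n n ℝ) (i j : n) :
    hermitianOfReal A i j = (1 + I) * A i j + (1 - I) * A j i :=
  rfl

theorem isHermitian_hermitianOfReal (A : Matrix n n ℝ) : (hermitianOfReal A).IsHermitian := by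
  ext i j
  simp only [conjTranspose_apply, hermitianOfReal_apply, star_add, star_mul', RCLike.star_def,
    map_sub, map_one, conj_I, conj_ofReal]
  ring

theorem hermitianOfReal_injective : Function.Injective (hermitianOfReal (n := n)) := by
  rw [← LinearMap.ker_eq_bot, LinearMap.ker_eq_bot']
  intro A hA
  ext i j
  have hij : hermitianOfReal A i j = 0 := by rw [hA, Matrix.zero_apply]
  have hji : hermitianOfReal A j i = 0 := by rw [hA, Matrix.zero_apply]
  rw [hermitianOfReal_apply] at hij hji
  have hA_ij : (A i j : ℂ) = 0 := by
    linear_combination ((1 - I) * hij + (1 + I) * hji + 2 * (A i j - A j i) * I_sq) / 4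
  exact_mod_cast hA_ij

noncomputable def quadFormsOfReal [Fintype n] (Φ : ι → n → ℂ) : Matrix n n ℝ →ₗ[ℝ] ι → ℝ where
  toFun A k := (star (Φ k) ⬝ᵥ hermitianOfReal A *ᵥ Φ k).re
  map_add' A B := by ext k; simp [add_mulVec, dotProduct_add]
  map_smul' c A := by ext k; simp [smul_mulVec, dotProduct_smul]

theorem exists_isHermitian_forall_star_dotProduct_mulVec_eq_zero [Fintype ι] [Fintype n]
    (Φ : ι → n → ℂ) (h : Fintype.card ι < Fintype.card n * Fintype.card n) :
    ∃ Q : Matrix n n ℂ, Q ≠ 0 ∧ Q.IsHermitian ∧ ∀ k, star (Φ k) ⬝ᵥ Q *ᵥ Φ k = 0 := by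
  have hker : LinearMap.ker (quadFormsOfReal Φ) ≠ ⊥ :=
    LinearMap.ker_ne_bot_of_finrank_lt (by simpa [Module.finrank_matrix] using h)
  obtain ⟨A, hA, hA0⟩ := (Submodule.ne_bot_iff _).mp hker
  have hQ := isHermitian_hermitianOfReal A
  refine ⟨hermitianOfReal A, (map_ne_zero_iff _ hermitianOfReal_injective).mpr hA0, hQ,
    fun k => Complex.ext (congrFun hA k) (hQ.im_star_dotProduct_mulVec_self (Φ k))⟩

end HermitianNullVector

namespace Matrix.IsHermitian
variable {n : Type*} [Fintype n] [DecidableEq n] {Q : Matrix n n ℂ}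

theorem star_dotProduct_mulVec_self_eq_sum_eigenvalues (hQ : Q.IsHermitian) (v : n → ℂ) :
    star v ⬝ᵥ Q *ᵥ v =
      ∑ i, (hQ.eigenvalues i : ℂ) * (‖⇑(hQ.eigenvectorBasis i) ⬝ᵥ star v‖ ^ 2 : ℝ) := by
  set U : Matrix n n ℂ := (hQ.eigenvectorUnitary : Matrix n n ℂ)
  set w := star U *ᵥ v
  have hw : ∀ i, ‖w i‖ = ‖⇑(hQ.eigenvectorBasis i) ⬝ᵥ star v‖ := by
    intro i
    rw [← norm_star]
    simp [w, U, mulVec, dotProduct, star_sum, mul_comm]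
  have hU : star v ᵥ* U = star w := by
    rw [star_mulVec, star_eq_conjTranspose, conjTranspose_conjTranspose]
  conv_lhs => rw [hQ.spectral_theorem]
  rw [Unitary.conjStarAlgAut_apply, ← mulVec_mulVec, dotProduct_mulVec, ← vecMul_vecMul, hU]
  change star w ᵥ* _ ⬝ᵥ w = _
  rw [dotProduct]
  simp only [vecMul_diagonal]
  refine Finset.sum_congr rfl fun i _ => ?_
  rw [Pi.star_apply, RCLike.star_def, ← hw, Complex.ofReal_pow, ← Complex.conj_mul',
    Function.comp_apply, RCLike.ofReal_eq_complex_ofReal]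
  ring

theorem eigenvectorBasis_dotProduct_star (hQ : Q.IsHermitian) (i j : n) :
    ⇑(hQ.eigenvectorBasis i) ⬝ᵥ star ⇑(hQ.eigenvectorBasis j) = if j = i then 1 else 0 :=
  orthonormal_iff_ite.mp hQ.eigenvectorBasis.orthonormal j i

theorem eigenvectorBasis_ne_zero (hQ : Q.IsHermitian) (i : n) : ⇑(hQ.eigenvectorBasis i) ≠ 0 :=
  (WithLp.ofLp_eq_zero 2).ne.2 (hQ.eigenvectorBasis.orthonormal.ne_zero i)

theorem eigenvalues_eq_zero_of_rank_le_two (hQ : Q.IsHermitian) (hrank : Q.rank ≤ 2) {i j k : n}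
    (hi : hQ.eigenvalues i ≠ 0) (hj : hQ.eigenvalues j ≠ 0) (hij : i ≠ j) (hki : k ≠ i)
    (hkj : k ≠ j) : hQ.eigenvalues k = 0 := by
  by_contra hk
  have hsub : ({i, j, k} : Finset n) ⊆ Finset.univ.filter (hQ.eigenvalues · ≠ 0) := by
    intro l hl
    simp only [Finset.mem_insert, Finset.mem_singleton] at hl
    rcases hl with rfl | rfl | rfl <;> simpa
  have hcard := Finset.card_le_card hsub
  rw [Finset.card_insert_of_notMem (by simp [hij, hki.symm]),
    Finset.card_pair hkj.symm, ← Fintype.card_subtype, ← hQ.rank_eq_card_non_zero_eigs] at hcard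
  omega

end Matrix.IsHermitian

section Intensity
variable {M N : ℕ} (Φ : Fin N → Fin M → ℂ)

theorem intensity_apply (x : Fin M → ℂ) (n : Fin N) :
    intensity Φ x n = ‖x ⬝ᵥ star (Φ n)‖ ^ 2 :=
  rfl

theorem intensity_smul (c : ℂ) (x : Fin M → ℂ) (n : Fin N) :
    intensity Φ (c • x) n = ‖c‖ ^ 2 * intensity Φ x n := by
  rw [intensity_apply, intensity_apply, smul_dotProduct, smul_eq_mul, norm_mul, mul_pow]

theorem intensity_sqrt_smul {r : ℝ} (hr : 0 ≤ r) (x : Fin M → ℂ) (n : Fin N) :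
    intensity Φ ((Real.sqrt r : ℂ) • x) n = r * intensity Φ x n := by
  rw [intensity_smul, Complex.norm_real, Real.norm_eq_abs, sq_abs, Real.sq_sqrt hr]

theorem not_phaseInjective_of_intensity_eq {x y : Fin M → ℂ}
    (h : intensity Φ x = intensity Φ y) (hxy : ∀ c : ℂ, x ≠ c • y) : ¬ PhaseInjective Φ :=
  fun hΦ => let ⟨_, hθ⟩ := hΦ x y h; hxy _ hθ

variable {Φ} {Q : Matrix (Fin M) (Fin M) ℂ}

theorem sum_eigenvalues_mul_intensity_eq_zero (hQ : Q.IsHermitian)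
    (hΦ : ∀ n, star (Φ n) ⬝ᵥ Q *ᵥ Φ n = 0) (n : Fin N) :
    ∑ i, hQ.eigenvalues i * intensity Φ (hQ.eigenvectorBasis i) n = 0 := by
  have h := (hQ.star_dotProduct_mulVec_self_eq_sum_eigenvalues (Φ n)).symm.trans (hΦ n)
  exact_mod_cast h

theorem not_phaseInjective_of_eigenvalues_pos_neg (hQ : Q.IsHermitian) (hrank : Q.rank ≤ 2)
    (hΦ : ∀ n, star (Φ n) ⬝ᵥ Q *ᵥ Φ n = 0) {i j : Fin M} (hi : 0 < hQ.eigenvalues i)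
    (hj : hQ.eigenvalues j < 0) : ¬ PhaseInjective Φ := by
  set u := fun k => ⇑(hQ.eigenvectorBasis k)
  have hij : i ≠ j := by rintro rfl; linarith
  refine not_phaseInjective_of_intensity_eq Φ (x := (Real.sqrt (hQ.eigenvalues i) : ℂ) • u i)
    (y := (Real.sqrt (-hQ.eigenvalues j) : ℂ) • u j) ?_ fun c hc => ?_
  · funext n
    have hsum := sum_eigenvalues_mul_intensity_eq_zero hQ hΦ n
    rw [Fintype.sum_eq_add i j hij fun k ⟨hki, hkj⟩ => by
      rw [hQ.eigenvalues_eq_zero_of_rank_le_two hrank hi.ne' hj.ne hij hki hkj, zero_mul]] at hsum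
    rw [intensity_sqrt_smul _ hi.le, intensity_sqrt_smul _ (by linarith)]
    linarith
  · have h := congrArg (· ⬝ᵥ star (u i)) hc
    simp only [u, smul_dotProduct, smul_eq_mul, hQ.eigenvectorBasis_dotProduct_star,
      if_true, if_neg hij, mul_one, mul_zero, Complex.ofReal_eq_zero] at h
    exact (Real.sqrt_pos.mpr hi).ne' h

theorem not_phaseInjective_of_eigenvalues_same_sign (hQ : Q.IsHermitian)
    (hΦ : ∀ n, star (Φ n) ⬝ᵥ Q *ᵥ Φ n = 0) {i : Fin M} (hi : hQ.eigenvalues i ≠ 0)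
    (hsign : ∀ k, 0 ≤ hQ.eigenvalues i * hQ.eigenvalues k) : ¬ PhaseInjective Φ := by
  refine not_phaseInjective_of_intensity_eq Φ (x := hQ.eigenvectorBasis i) (y := 0) ?_
    fun c hc => hQ.eigenvectorBasis_ne_zero i (by rw [hc, smul_zero])
  funext n
  have hterm_nonneg : ∀ k, 0 ≤ hQ.eigenvalues i * hQ.eigenvalues k *
      intensity Φ (hQ.eigenvectorBasis k) n := fun k =>
    mul_nonneg (hsign k) (sq_nonneg _)
  have hsum : ∑ k, hQ.eigenvalues i * hQ.eigenvalues k *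
      intensity Φ (hQ.eigenvectorBasis k) n = 0 := by
    simp_rw [mul_assoc, ← Finset.mul_sum, sum_eigenvalues_mul_intensity_eq_zero hQ hΦ n, mul_zero]
  have hterm := (Finset.sum_eq_zero_iff_of_nonneg fun k _ => hterm_nonneg k).mp hsum i
    (Finset.mem_univ i)
  rw [mul_eq_zero, mul_self_eq_zero] at hterm
  rw [hterm.resolve_left hi]
  simp [intensity_apply]

theorem not_phaseInjective_of_isHermitian_of_rank_le_two (hQ : Q.IsHermitian) (hQ0 : Q ≠ 0)
    (hrank : Q.rank ≤ 2) (hΦ : ∀ n, star (Φ n) ⬝ᵥ Q *ᵥ Φ n = 0) : ¬ PhaseInjective Φ := by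
  by_cases hmixed : ∃ i j, 0 < hQ.eigenvalues i ∧ hQ.eigenvalues j < 0
  · obtain ⟨i, j, hi, hj⟩ := hmixed
    exact not_phaseInjective_of_eigenvalues_pos_neg hQ hrank hΦ hi hj
  · obtain ⟨i, hi⟩ := Function.ne_iff.mp (mt hQ.eigenvalues_eq_zero_iff.mp hQ0)
    push Not at hmixed
    refine not_phaseInjective_of_eigenvalues_same_sign hQ hΦ hi fun k => ?_
    rcases hi.lt_or_gt with hi | hi
    · exact mul_nonneg_of_nonpos_of_nonpos hi.le (not_lt.mp fun hk => (hmixed k i hk).not_gt hi)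
    · exact mul_nonneg hi.le (hmixed i k hi)

end Intensity

theorem dim_two_three_vectors_not_injective (φ : Fin 3 → Fin 2 → ℂ) :
    (∃ Q : Matrix (Fin 2) (Fin 2) ℂ, Q ≠ 0 ∧ Q.IsHermitian ∧
        ∀ n : Fin 3, (fun m => (starRingEnd ℂ) (φ n m)) ⬝ᵥ Q *ᵥ (φ n) = 0) ∧
    ¬ PhaseInjective φ := by
  obtain ⟨Q, hQ0, hQ, hφ⟩ := exists_isHermitian_forall_star_dotProduct_mulVec_eq_zero φ (by simp)
  exact ⟨⟨Q, hQ0, hQ, hφ⟩, not_phaseInjective_of_isHermitian_of_rank_le_two hQ hQ0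
    (Q.rank_le_card_width.trans (by simp)) hφ⟩
end
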